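/- For real x with x ≥ y > 0, (x² − y²)^{1/2} R_C(x², y²) = arccosh(x/y) = ln((x + √(x² − y²))/y). -/

import Mathlib

open MeasureTheory Real

noncomputable def RC (x y : ℝ) : ℝ :=
  (1/2) * ∫ t in Set.Ioi (0:ℝ), (Real.sqrt (t + x))⁻¹ * (t + y)⁻¹

noncomputable def RF (x y z : ℝ) : ℝ :=
  (1/2) * ∫ t in Set.Ioi (0:ℝ), (Real.sqrt ((t + x) * (t + y) * (t + z)))⁻¹

noncomputable def RD (x y z : ℝ) : ℝ :=
  (3/2) * ∫ t in Set.Ioi (0:ℝ),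
    (Real.sqrt ((t + x) * (t + y)))⁻¹ * ((t + z) * Real.sqrt (t + z))⁻¹

noncomputable def RJ (x y z p : ℝ) : ℝ :=
  (3/2) * ∫ t in Set.Ioi (0:ℝ),
    (Real.sqrt ((t + x) * (t + y) * (t + z)))⁻¹ * (t + p)⁻¹

noncomputable def RG (x y z : ℝ) : ℝ :=
  (1/4) * ∫ t in Set.Ioi (0:ℝ),
    (Real.sqrt ((t + x) * (t + y) * (t + z)))⁻¹ *
      (x / (t + x) + y / (t + y) + z / (t + z)) * t

/-!
With `a = √(x - y)`, the function `t ↦ (log (√(t + x) - a) - log (√(t + x) + a)) / a` is an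
antiderivative of the integrand of `RC x y` on `[0, ∞)` (because `t + y = (√(t + x) - a)(√(t + x) + a)`)
and tends to `0` at infinity. Hence `√(x - y) RC(x, y) = ½ log ((√x + a) / (√x - a))`, which equals
`log ((√x + a) / √y)` since `(√x + a)(√x - a) = y`. Substituting `x², y²` gives the theorem.
-/

open Filter Set Topology

theorem hasDerivAt_log_sqrt_sub_sub_log_sqrt_add {a c t : ℝ} (h : a ^ 2 < t + c) :
    HasDerivAt (fun s => log (√(s + c) - a) - log (√(s + c) + a))
      (a * ((√(t + c))⁻¹ * (t + c - a ^ 2)⁻¹)) t := by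
  have habs : |a| < √(t + c) := by
    rw [← sqrt_sq_eq_abs]
    exact sqrt_lt_sqrt (sq_nonneg a) h
  obtain ⟨hsub, hadd⟩ : 0 < √(t + c) - a ∧ 0 < √(t + c) + a := by
    constructor <;> linarith [abs_lt.1 habs]
  have htc : 0 < t + c := by nlinarith [sq_nonneg a]
  have hsqrt : HasDerivAt (fun s => √(s + c)) (1 / (2 * √(t + c))) t := by
    simpa using ((hasDerivAt_id' t).add_const c).sqrt htc.ne'
  refine (((hsqrt.sub_const a).log hsub.ne').sub ((hsqrt.add_const a).log hadd.ne')).congr_deriv ?_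
  have hsq : t + c - a ^ 2 = (√(t + c) + a) * (√(t + c) - a) := by
    rw [← mul_self_sub_mul_self, mul_self_sqrt htc.le, sq]
  rw [hsq]
  field_simp
  ring

theorem tendsto_log_sub_sub_log_add_atTop (a : ℝ) :
    Tendsto (fun u => log (u - a) - log (u + a)) atTop (𝓝 0) := by
  simpa only [sub_zero, ← sub_eq_add_neg, sub_sub_sub_cancel_right] using
    (tendsto_log_comp_add_sub_log (-a)).sub (tendsto_log_comp_add_sub_log a)

theorem integral_Ioi_inv_sqrt_add_mul_inv_add {x y : ℝ} (hy : 0 < y) (hyx : y < x) :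
    ∫ t in Ioi 0, (√(t + x))⁻¹ * (t + y)⁻¹ =
      (log (√x + √(x - y)) - log (√x - √(x - y))) / √(x - y) := by
  set a := √(x - y)
  have ha : 0 < a := sqrt_pos.2 (sub_pos.2 hyx)
  have ha2 : a ^ 2 = x - y := sq_sqrt (sub_pos.2 hyx).le
  have hderiv : ∀ t ∈ Ici (0 : ℝ), HasDerivAt
      (fun s => (log (√(s + x) - a) - log (√(s + x) + a)) / a) ((√(t + x))⁻¹ * (t + y)⁻¹) t := by
    intro t ht
    have hlt : a ^ 2 < t + x := by rw [ha2]; linarith [mem_Ici.1 ht]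
    refine ((hasDerivAt_log_sqrt_sub_sub_log_sqrt_add hlt).div_const a).congr_deriv ?_
    rw [ha2]
    field_simp
    ring_nf
  have hlim : Tendsto (fun s => (log (√(s + x) - a) - log (√(s + x) + a)) / a) atTop (𝓝 0) := by
    simpa using ((tendsto_log_sub_sub_log_add_atTop a).comp
      (tendsto_sqrt_atTop.comp (tendsto_atTop_add_const_right _ x tendsto_id))).div_const a
  have hnonneg : ∀ t ∈ Ioi (0 : ℝ), 0 ≤ (√(t + x))⁻¹ * (t + y)⁻¹ := fun t ht => by
    have : 0 < t + y := by linarith [mem_Ioi.1 ht]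
    positivity
  rw [integral_Ioi_of_hasDerivAt_of_nonneg' hderiv hnonneg hlim]
  simp only [zero_add]
  ring

theorem sqrt_sub_mul_RC {x y : ℝ} (hy : 0 < y) (hyx : y ≤ x) :
    √(x - y) * RC x y = log ((√x + √(x - y)) / √y) := by
  rcases hyx.eq_or_lt with rfl | hlt
  · simp [div_self (sqrt_pos.2 hy).ne']
  rw [RC, integral_Ioi_inv_sqrt_add_mul_inv_add hy hlt]
  set a := √(x - y)
  have ha : 0 < a := sqrt_pos.2 (sub_pos.2 hlt)
  have hax : a < √x := sqrt_lt_sqrt (sub_pos.2 hlt).le (by linarith)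
  have hprod : (√x + a) * (√x - a) = y := by
    rw [← mul_self_sub_mul_self, mul_self_sqrt (hy.trans hlt).le,
      mul_self_sqrt (sub_pos.2 hlt).le]
    ring
  have hlog_y : log (√x + a) + log (√x - a) = log y := by
    rw [← log_mul (by linarith) (by linarith), hprod]
  rw [log_div (by linarith) (sqrt_pos.2 hy).ne', log_sqrt hy.le]
  field_simp
  linarith

theorem stmt6 (x y : ℝ) (hy : 0 < y) (hxy : y ≤ x) :
    Real.sqrt (x ^ 2 - y ^ 2) * RC (x ^ 2) (y ^ 2) =
      Real.log ((x + Real.sqrt (x ^ 2 - y ^ 2)) / y) := by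
  have h := sqrt_sub_mul_RC (pow_pos hy 2) (pow_le_pow_left₀ hy.le hxy 2)
  rwa [sqrt_sq (hy.le.trans hxy), sqrt_sq hy.le] at h
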